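/- arXiv:math/0503514 — 2 statements merged into one kernel-verified Lean document; each statement's English description precedes it below -/
import Mathlib

section
/- Let G be a group and S a stable admissible family of subgroups, i.e. for all K ≤ H in S there exists L ∈ S with L ≤ K and L normal in H. Then the monoid Ĝ_S of compatible coset choices (with product (f·f')(H) = f(H)f'(H^f)) is a group: every element has a two-sided inverse. -/
open scoped Pointwise

variable {G : Type*} [Group G]

/-- The conjugate subgroup `H^x = x⁻¹ H x`. -/
def conjSub (x : G) (H : Subgroup G) : Subgroup G :=
  H.map (MulAut.conj x⁻¹).toMonoidHom

/-- The completion `Ĝ_S`: functions assigning to each `H ∈ S` a right coset of `H`,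
compatibly with inclusions. -/
def Ghat (S : Set (Subgroup G)) : Set ({H : Subgroup G // H ∈ S} → Set G) :=
  {f | (∀ H, ∃ x : G, f H = (H.1 : Set G) * {x}) ∧
       ∀ K H : {H : Subgroup G // H ∈ S}, K.1 ≤ H.1 → f K ⊆ f H}

/-- The product `(f·f')(H) = f(H) f'(H^f)`, written pointwise: an element of
`(f·f')(H)` is `x * y` with `x ∈ f(H)` and `y ∈ f'(H^x)` (note `H^x = H^f` for any
`x ∈ f(H)`). -/
def GhatMul (S : Set (Subgroup G)) (hconj : ∀ H ∈ S, ∀ x : G, conjSub x H ∈ S)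
    (f f' : {H : Subgroup G // H ∈ S} → Set G) :
    {H : Subgroup G // H ∈ S} → Set G :=
  fun H => {z : G | ∃ x ∈ f H, ∃ y ∈ f' ⟨conjSub x H.1, hconj H.1 H.2 x⟩, z = x * y}

/-- The identity element `e(H) = H`. -/
def GhatOne (S : Set (Subgroup G)) : {H : Subgroup G // H ∈ S} → Set G :=
  fun H => (H.1 : Set G)

/-- The natural map `g ↦ ĝ`, `ĝ(H) = Hg`. -/
def GhatOf (S : Set (Subgroup G)) (g : G) : {H : Subgroup G // H ∈ S} → Set G :=
  fun H => (H.1 : Set G) * {g}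


lemma mem_conjSub {x g : G} {H : Subgroup G} : g ∈ conjSub x H ↔ x * g * x⁻¹ ∈ H := by
  unfold conjSub
  simp only [Subgroup.mem_map, MulEquiv.coe_toMonoidHom, MulAut.conj_apply]
  constructor
  · rintro ⟨h, hh, rfl⟩
    convert hh using 1; group
  · intro hg
    exact ⟨x * g * x⁻¹, hg, by group⟩

lemma mem_coset {H : Subgroup G} {x z : G} :
    z ∈ (H : Set G) * ({x} : Set G) ↔ z * x⁻¹ ∈ H := by
  constructor
  · rintro ⟨a, ha, b, hb, rfl⟩
    simp only [Set.mem_singleton_iff] at hb; subst hb; simpa using ha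
  · intro h
    exact ⟨z * x⁻¹, h, x, rfl, by group⟩

lemma conjSub_congr {x y : G} {H : Subgroup G} (h : x * y⁻¹ ∈ H) :
    conjSub x H = conjSub y H := by
  ext g
  rw [mem_conjSub, mem_conjSub]
  constructor
  · intro hx
    have := H.mul_mem (H.mul_mem (H.inv_mem h) hx) h
    convert this using 1; group
  · intro hy
    have := H.mul_mem (H.mul_mem h hy) (H.inv_mem h)
    convert this using 1; group

lemma conjSub_inv_conjSub {x : G} {H : Subgroup G} :
    conjSub x⁻¹ (conjSub x H) = H := by
  ext g
  rw [mem_conjSub, mem_conjSub]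
  constructor
  · intro hx; convert hx using 1; group
  · intro hg
    have : x * (x⁻¹ * g * x⁻¹⁻¹) * x⁻¹ = g := by group
    rw [this]; exact hg

section
variable {S : Set (Subgroup G)} {f : {H : Subgroup G // H ∈ S} → Set G}

lemma Ghat.nonempty (hf : f ∈ Ghat S) (H : {H : Subgroup G // H ∈ S}) :
    ∃ x, x ∈ f H := by
  obtain ⟨x, hx⟩ := hf.1 H
  exact ⟨x, by rw [hx, mem_coset]; simpa using H.1.one_mem⟩

lemma Ghat.diff (hf : f ∈ Ghat S) (H : {H : Subgroup G // H ∈ S}) {y z : G}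
    (hy : y ∈ f H) (hz : z ∈ f H) : z * y⁻¹ ∈ H.1 := by
  obtain ⟨x, hx⟩ := hf.1 H
  rw [hx, mem_coset] at hy hz
  have := H.1.mul_mem hz (H.1.inv_mem hy)
  convert this using 1; group

/-- Key coherence lemma: fixed points of `y ↦ f(yKy⁻¹)` differ by elements of `K`. -/
lemma Ghat.key (hf : f ∈ Ghat S)
    (hdir : ∀ T : Finset (Subgroup G), ↑T ⊆ S → ∃ K ∈ S, ∀ H ∈ T, K ≤ H)
    {K K' : Subgroup G} (hle : K ≤ K') {y y' : G} {A B : {H : Subgroup G // H ∈ S}}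
    (hA : A.1 = conjSub y⁻¹ K) (hB : B.1 = conjSub y'⁻¹ K')
    (hy : y ∈ f A) (hy' : y' ∈ f B) : y⁻¹ * y' ∈ K' := by
  classical
  obtain ⟨M, hM, hMle⟩ := hdir {A.1, B.1} (by
    intro X hX
    simp only [Finset.coe_insert, Finset.coe_singleton, Set.mem_insert_iff,
      Set.mem_singleton_iff] at hX
    rcases hX with rfl | rfl
    · exact A.2
    · exact B.2)
  have hMA : M ≤ A.1 := hMle _ (Finset.mem_insert_self _ _)
  have hMB : M ≤ B.1 := hMle _ (Finset.mem_insert_of_mem (Finset.mem_singleton_self _))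
  obtain ⟨z, hz⟩ := Ghat.nonempty hf ⟨M, hM⟩
  have hzA : z ∈ f A := hf.2 ⟨M, hM⟩ A hMA hz
  have hzB : z ∈ f B := hf.2 ⟨M, hM⟩ B hMB hz
  have h1 : z * y⁻¹ ∈ A.1 := Ghat.diff hf A hy hzA
  have h2 : z * y'⁻¹ ∈ B.1 := Ghat.diff hf B hy' hzB
  rw [hA, mem_conjSub] at h1
  rw [hB, mem_conjSub] at h2
  -- h1 : y⁻¹ * (z * y⁻¹) * y⁻¹⁻¹ ∈ K, i.e. y⁻¹ * z ∈ K
  have h1' : y⁻¹ * z ∈ K := by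
    have : y⁻¹ * (z * y⁻¹) * y⁻¹⁻¹ = y⁻¹ * z := by group
    rwa [this] at h1
  have h2' : y'⁻¹ * z ∈ K' := by
    have : y'⁻¹ * (z * y'⁻¹) * y'⁻¹⁻¹ = y'⁻¹ * z := by group
    rwa [this] at h2
  have := K'.mul_mem (hle h1') (K'.inv_mem h2')
  convert this using 1; group

/-- Existence of fixed points, via stability and directedness. -/
lemma Ghat.exists_fix (hf : f ∈ Ghat S)
    (hconj : ∀ H ∈ S, ∀ x : G, conjSub x H ∈ S)
    (hdir : ∀ T : Finset (Subgroup G), ↑T ⊆ S → ∃ K ∈ S, ∀ H ∈ T, K ≤ H)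
    (hstable : ∀ K H : Subgroup G, K ∈ S → H ∈ S → K ≤ H →
      ∃ L ∈ S, L ≤ K ∧ ∀ h ∈ H, conjSub h L = L)
    (K : {H : Subgroup G // H ∈ S}) :
    ∃ y : G, y ∈ f ⟨conjSub y⁻¹ K.1, hconj K.1 K.2 y⁻¹⟩ := by
  classical
  obtain ⟨x₀, hx₀⟩ := hf.1 K
  have hK' : conjSub x₀⁻¹ K.1 ∈ S := hconj K.1 K.2 x₀⁻¹
  obtain ⟨M, hM, hMle⟩ := hdir {K.1, conjSub x₀⁻¹ K.1} (by
    intro X hX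
    simp only [Finset.coe_insert, Finset.coe_singleton, Set.mem_insert_iff,
      Set.mem_singleton_iff] at hX
    rcases hX with rfl | rfl
    · exact K.2
    · exact hK')
  have hMK : M ≤ K.1 := hMle _ (Finset.mem_insert_self _ _)
  have hMK' : M ≤ conjSub x₀⁻¹ K.1 :=
    hMle _ (Finset.mem_insert_of_mem (Finset.mem_singleton_self _))
  obtain ⟨L, hL, hLM, hLnorm⟩ := hstable M K.1 hM K.2 hMK
  obtain ⟨y, hy⟩ := Ghat.nonempty hf ⟨L, hL⟩
  have hyK : y ∈ f K := hf.2 ⟨L, hL⟩ K (le_trans hLM hMK) hy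
  have hk : y * x₀⁻¹ ∈ K.1 := by rw [hx₀, mem_coset] at hyK; exact hyK
  refine ⟨y, hf.2 ⟨L, hL⟩ _ ?_ hy⟩
  -- goal : L ≤ conjSub y⁻¹ K.1
  intro g hg
  rw [mem_conjSub]
  -- y⁻¹ * g * y⁻¹⁻¹ ∈ K
  set k := y * x₀⁻¹ with hkdef
  have hgL : g ∈ L := hg
  have hgk : k⁻¹ * g * k ∈ L := by
    rw [← hLnorm k hk, mem_conjSub]
    have e : k * (k⁻¹ * g * k) * k⁻¹ = g := by group
    rw [e]; exact hgL
  have hgK' : k⁻¹ * g * k ∈ conjSub x₀⁻¹ K.1 := hMK' (hLM hgk)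
  rw [mem_conjSub] at hgK'
  -- hgK' : x₀⁻¹ * (k⁻¹ * g * k) * x₀⁻¹⁻¹ ∈ K
  have e2 : y⁻¹ * g * y⁻¹⁻¹ = x₀⁻¹ * (k⁻¹ * g * k) * x₀⁻¹⁻¹ := by
    rw [hkdef]; group
  rw [e2]; exact hgK'
end

/-- If `S` is a stable admissible family (for all `K ≤ H` in `S` there is `L ∈ S` with
`L ≤ K` and `L` normal in `H`), then the monoid `Ĝ_S` is a group: every element has a
two-sided inverse. -/
theorem Ghat_group_of_stable (S : Set (Subgroup G))
    (hconj : ∀ H ∈ S, ∀ x : G, conjSub x H ∈ S)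
    (hdir : ∀ T : Finset (Subgroup G), ↑T ⊆ S → ∃ K ∈ S, ∀ H ∈ T, K ≤ H)
    (hstable : ∀ K H : Subgroup G, K ∈ S → H ∈ S → K ≤ H →
      ∃ L ∈ S, L ≤ K ∧ ∀ h ∈ H, conjSub h L = L) :
    ∀ f ∈ Ghat S, ∃ f' ∈ Ghat S,
      GhatMul S hconj f f' = GhatOne S ∧ GhatMul S hconj f' f = GhatOne S := by
  intro f hf
  choose c hc using fun K => Ghat.exists_fix hf hconj hdir hstable K
  refine ⟨fun K => (K.1 : Set G) * {(c K)⁻¹}, ⟨fun H => ⟨(c H)⁻¹, rfl⟩, ?_⟩, ?_, ?_⟩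
  · -- compatibility of f'
    intro K₁ K₂ hle z hz
    have hz1 : z * (c K₁)⁻¹⁻¹ ∈ K₁.1 := mem_coset.mp hz
    have hkey : (c K₁)⁻¹ * c K₂ ∈ K₂.1 :=
      Ghat.key hf hdir hle rfl rfl (hc K₁) (hc K₂)
    refine mem_coset.mpr ?_
    have : z * (c K₂)⁻¹⁻¹ = (z * (c K₁)⁻¹⁻¹) * ((c K₁)⁻¹ * c K₂) := by group
    rw [this]
    exact K₂.1.mul_mem (hle hz1) hkey
  · -- f * f' = e
    funext H
    ext z
    simp only [GhatMul, GhatOne, Set.mem_setOf_eq]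
    constructor
    · rintro ⟨x, hx, y, hy, rfl⟩
      set Kx : {H : Subgroup G // H ∈ S} := ⟨conjSub x H.1, hconj H.1 H.2 x⟩ with hKx
      have hy1 : y * (c Kx)⁻¹⁻¹ ∈ conjSub x H.1 := mem_coset.mp hy
      have hkey : x⁻¹ * c Kx ∈ conjSub x H.1 :=
        Ghat.key hf hdir (le_refl (conjSub x H.1))
          (conjSub_inv_conjSub (x := x) (H := H.1)).symm rfl hx (hc Kx)
      have hcx : c Kx * x⁻¹ ∈ H.1 := by
        have := mem_conjSub.mp hkey
        have e : x * (x⁻¹ * c Kx) * x⁻¹ = c Kx * x⁻¹ := by group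
        rwa [e] at this
      have hyc : x * (y * (c Kx)⁻¹⁻¹) * x⁻¹ ∈ H.1 := mem_conjSub.mp hy1
      show x * y ∈ H.1
      have e : x * y = (x * (y * (c Kx)⁻¹⁻¹) * x⁻¹) * (c Kx * x⁻¹)⁻¹ := by group
      rw [e]
      exact H.1.mul_mem hyc (H.1.inv_mem hcx)
    · intro hz
      obtain ⟨x, hx⟩ := Ghat.nonempty hf H
      set Kx : {H : Subgroup G // H ∈ S} := ⟨conjSub x H.1, hconj H.1 H.2 x⟩ with hKx
      have hkey : x⁻¹ * c Kx ∈ conjSub x H.1 :=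
        Ghat.key hf hdir (le_refl (conjSub x H.1))
          (conjSub_inv_conjSub (x := x) (H := H.1)).symm rfl hx (hc Kx)
      have hcx : c Kx * x⁻¹ ∈ H.1 := by
        have := mem_conjSub.mp hkey
        have e : x * (x⁻¹ * c Kx) * x⁻¹ = c Kx * x⁻¹ := by group
        rwa [e] at this
      refine ⟨x, hx, x⁻¹ * z, mem_coset.mpr ?_, by group⟩
      rw [mem_conjSub]
      have e : x * (x⁻¹ * z * (c Kx)⁻¹⁻¹) * x⁻¹ = z * (c Kx * x⁻¹) := by group
      rw [e]
      exact H.1.mul_mem hz hcx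
  · -- f' * f = e
    funext H
    ext z
    simp only [GhatMul, GhatOne, Set.mem_setOf_eq]
    constructor
    · rintro ⟨x, hx, y, hy, rfl⟩
      have hx1 : x * (c H)⁻¹⁻¹ ∈ H.1 := mem_coset.mp hx
      have hsub : (⟨conjSub x H.1, hconj H.1 H.2 x⟩ : {H : Subgroup G // H ∈ S})
          = ⟨conjSub (c H)⁻¹ H.1, hconj H.1 H.2 (c H)⁻¹⟩ :=
        Subtype.ext (conjSub_congr hx1)
      rw [hsub] at hy
      have hdiff : y * (c H)⁻¹ ∈ conjSub (c H)⁻¹ H.1 :=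
        Ghat.diff hf ⟨conjSub (c H)⁻¹ H.1, hconj H.1 H.2 (c H)⁻¹⟩ (hc H) hy
      have hcy : (c H)⁻¹ * y ∈ H.1 := by
        have := mem_conjSub.mp hdiff
        have e : (c H)⁻¹ * (y * (c H)⁻¹) * (c H)⁻¹⁻¹ = (c H)⁻¹ * y := by group
        rwa [e] at this
      show x * y ∈ H.1
      have e : x * y = (x * (c H)⁻¹⁻¹) * ((c H)⁻¹ * y) := by group
      rw [e]
      exact H.1.mul_mem hx1 hcy
    · intro hz
      refine ⟨z * (c H)⁻¹, mem_coset.mpr ?_, c H, ?_, by group⟩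
      · have e : z * (c H)⁻¹ * (c H)⁻¹⁻¹ = z := by group
        rw [e]; exact hz
      · have hsub : (⟨conjSub (z * (c H)⁻¹) H.1, hconj H.1 H.2 (z * (c H)⁻¹)⟩ :
            {H : Subgroup G // H ∈ S})
            = ⟨conjSub (c H)⁻¹ H.1, hconj H.1 H.2 (c H)⁻¹⟩ :=
          Subtype.ext (conjSub_congr (by
            have e : z * (c H)⁻¹ * (c H)⁻¹⁻¹ = z := by group
            rw [e]; exact hz))
        rw [hsub]
        exact hc H
end

section
/- Let G be a group, S an admissible family of subgroups, and M a ZG-module with M = ⋃_{H∈S} M^H. For m ∈ M and f ∈ Ĝ_S, define m·f = m·x where f(H) = Hx for any H ∈ S fixing m. Then m·f is well-defined (independent of the choices of H and x) and defines a monoid action of Ĝ_S on M extending the G-action. -/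
open scoped Pointwise

variable {G : Type*} [Group G]

/-- The relation `m · f = m'`: there are `H ∈ S` fixing `m` and `x` with `f(H) = Hx`
and `m' = m · x`. -/
def GhatActRel (S : Set (Subgroup G)) (M : Type*) [AddCommGroup M]
    [DistribMulAction Gᵐᵒᵖ M]
    (m : M) (f : {H : Subgroup G // H ∈ S} → Set G) (m' : M) : Prop :=
  ∃ (H : {H : Subgroup G // H ∈ S}) (x : G),
    (∀ h ∈ H.1, MulOpposite.op h • m = m) ∧
    f H = (H.1 : Set G) * {x} ∧ m' = MulOpposite.op x • m

lemma mem_coset_iff {H : Subgroup G} {x z : G} :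
    z ∈ (H : Set G) * ({x} : Set G) ↔ ∃ h ∈ H, z = h * x := by
  constructor
  · rintro ⟨h, hh, y, hy, rfl⟩
    rcases Set.mem_singleton_iff.mp hy with rfl
    exact ⟨h, hh, rfl⟩
  · rintro ⟨h, hh, rfl⟩
    exact ⟨h, hh, x, rfl, rfl⟩

lemma smul_fix {M : Type*} [AddCommGroup M] [DistribMulAction Gᵐᵒᵖ M]
    {m : M} {h x : G} (hfix : MulOpposite.op h • m = m) :
    MulOpposite.op (h * x) • m = MulOpposite.op x • m := by
  rw [MulOpposite.op_mul, mul_smul, hfix]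

/-- Any two witnesses `(H, x)`, `(H', x')` for `m · f` act the same on `m`. -/
lemma Ghat_wd {S : Set (Subgroup G)}
    (hdir : ∀ T : Finset (Subgroup G), ↑T ⊆ S → ∃ K ∈ S, ∀ H ∈ T, K ≤ H)
    {M : Type*} [AddCommGroup M] [DistribMulAction Gᵐᵒᵖ M] {m : M}
    {f : {H : Subgroup G // H ∈ S} → Set G} (hf : f ∈ Ghat S)
    {H H' : {H : Subgroup G // H ∈ S}} {x x' : G}
    (hH : ∀ h ∈ H.1, MulOpposite.op h • m = m)
    (hH' : ∀ h ∈ H'.1, MulOpposite.op h • m = m)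
    (hx : f H = (H.1 : Set G) * {x}) (hx' : f H' = (H'.1 : Set G) * {x'}) :
    MulOpposite.op x • m = MulOpposite.op x' • m := by
  classical
  obtain ⟨K, hKS, hK⟩ := hdir {H.1, H'.1} (by
    intro A hA
    simp only [Finset.coe_insert, Finset.coe_singleton, Set.mem_insert_iff,
      Set.mem_singleton_iff] at hA
    rcases hA with rfl | rfl
    · exact H.2
    · exact H'.2)
  have hKH : K ≤ H.1 := hK _ (by simp)
  have hKH' : K ≤ H'.1 := hK _ (by simp)
  obtain ⟨z, hz⟩ := hf.1 ⟨K, hKS⟩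
  have hzK : z ∈ f ⟨K, hKS⟩ := by
    rw [hz]; exact mem_coset_iff.mpr ⟨1, one_mem _, (one_mul z).symm⟩
  have h1 : z ∈ f H := hf.2 ⟨K, hKS⟩ H hKH hzK
  have h2 : z ∈ f H' := hf.2 ⟨K, hKS⟩ H' hKH' hzK
  rw [hx] at h1; rw [hx'] at h2
  obtain ⟨h, hh, rfl⟩ := mem_coset_iff.mp h1
  obtain ⟨h', hh', he⟩ := mem_coset_iff.mp h2
  calc MulOpposite.op x • m = MulOpposite.op (h * x) • m := (smul_fix (hH h hh)).symm
    _ = MulOpposite.op (h' * x') • m := by rw [he]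
    _ = MulOpposite.op x' • m := smul_fix (hH' h' hh')

lemma conjSub_mem_iff {x : G} {H : Subgroup G} {g : G} :
    g ∈ conjSub x H ↔ ∃ h ∈ H, g = x⁻¹ * h * x := by
  simp only [conjSub, Subgroup.mem_map, MulEquiv.coe_toMonoidHom, MulAut.conj_apply, inv_inv]
  constructor
  · rintro ⟨h, hh, rfl⟩; exact ⟨h, hh, rfl⟩
  · rintro ⟨h, hh, rfl⟩; exact ⟨h, hh, rfl⟩

lemma conjSub_mul {k w : G} {K : Subgroup G} (hk : k ∈ K) :
    conjSub (k * w) K = conjSub w K := by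
  ext g
  simp only [conjSub_mem_iff]
  constructor
  · rintro ⟨h, hh, rfl⟩
    exact ⟨k⁻¹ * h * k, K.mul_mem (K.mul_mem (K.inv_mem hk) hh) hk, by group⟩
  · rintro ⟨h, hh, rfl⟩
    exact ⟨k * h * k⁻¹, K.mul_mem (K.mul_mem hk hh) (K.inv_mem hk), by group⟩

/-- Let `S` be an admissible family and `M` a `ℤG`-module (with right `G`-action) in
which every element is fixed by some member of `S`. Then `m · f := m · x` (where
`f(H) = Hx` for some `H ∈ S` fixing `m`) is well-defined, and this defines a monoid
action of `Ĝ_S` on `M` extending the `G`-action. -/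
theorem Ghat_action (S : Set (Subgroup G))
    (hconj : ∀ H ∈ S, ∀ x : G, conjSub x H ∈ S)
    (hdir : ∀ T : Finset (Subgroup G), ↑T ⊆ S → ∃ K ∈ S, ∀ H ∈ T, K ≤ H)
    (M : Type*) [AddCommGroup M] [DistribMulAction Gᵐᵒᵖ M]
    (hM : ∀ m : M, ∃ H ∈ S, ∀ h ∈ H, MulOpposite.op h • m = m) :
    (∀ (m : M) (f : {H : Subgroup G // H ∈ S} → Set G), f ∈ Ghat S →
      ∃! m' : M, GhatActRel S M m f m') ∧
    (∀ m : M, GhatActRel S M m (GhatOne S) m) ∧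
    (∀ (m m₁ m₂ : M) (f f' : {H : Subgroup G // H ∈ S} → Set G),
      f ∈ Ghat S → f' ∈ Ghat S →
      GhatActRel S M m f m₁ → GhatActRel S M m₁ f' m₂ →
      GhatActRel S M m (GhatMul S hconj f f') m₂) ∧
    (∀ (m : M) (g : G), GhatActRel S M m (GhatOf S g) (MulOpposite.op g • m)) := by
  refine ⟨?_, ?_, ?_, ?_⟩
  · -- well-definedness
    intro m f hf
    obtain ⟨H, hHS, hHfix⟩ := hM m
    obtain ⟨x, hx⟩ := hf.1 ⟨H, hHS⟩
    refine ⟨MulOpposite.op x • m, ⟨⟨H, hHS⟩, x, hHfix, hx, rfl⟩, ?_⟩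
    rintro m' ⟨H', x', hfix', hx', rfl⟩
    exact Ghat_wd hdir hf hfix' hHfix hx' hx
  · -- identity
    intro m
    obtain ⟨H, hHS, hHfix⟩ := hM m
    refine ⟨⟨H, hHS⟩, 1, hHfix, ?_, by simp⟩
    simp [GhatOne]
  · -- multiplicativity
    rintro m m₁ m₂ f f' hf hf' ⟨H, x, hHfix, hx, rfl⟩ ⟨H', y, hH'fix, hy, rfl⟩
    -- pick K ∈ S, K ≤ H
    obtain ⟨K, hKS, hK⟩ := hdir {H.1} (by
      intro A hA
      simp only [Finset.coe_singleton, Set.mem_singleton_iff] at hA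
      subst hA; exact H.2)
    have hKH : K ≤ H.1 := hK _ (by simp)
    obtain ⟨w, hw⟩ := hf.1 ⟨K, hKS⟩
    have hwK : w ∈ f ⟨K, hKS⟩ := by
      rw [hw]; exact mem_coset_iff.mpr ⟨1, one_mem _, (one_mul w).symm⟩
    have hwH : w ∈ f H := hf.2 ⟨K, hKS⟩ H hKH hwK
    rw [hx] at hwH
    obtain ⟨h, hh, hhw⟩ := mem_coset_iff.mp hwH
    -- op w • m = op x • m
    have hwm : MulOpposite.op w • m = MulOpposite.op x • m := by
      rw [hhw]; exact smul_fix (hHfix h hh)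
    -- conjSub w K fixes m₁ = op x • m
    set Kw : {H : Subgroup G // H ∈ S} := ⟨conjSub w K, hconj K hKS w⟩ with hKwdef
    have hKwfix : ∀ g ∈ Kw.1, MulOpposite.op g • (MulOpposite.op x • m)
        = MulOpposite.op x • m := by
      intro g hg
      obtain ⟨k, hk, rfl⟩ := conjSub_mem_iff.mp hg
      rw [← hwm, ← mul_smul, ← MulOpposite.op_mul]
      have : w * (w⁻¹ * k * w) = k * w := by group
      rw [this, smul_fix (hHfix k (hKH hk)), hwm, ← hwm]
    obtain ⟨y', hy'⟩ := hf'.1 Kw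
    -- y' and y act the same on m₁
    have hyy' : MulOpposite.op y' • (MulOpposite.op x • m)
        = MulOpposite.op y • (MulOpposite.op x • m) :=
      Ghat_wd hdir hf' hKwfix hH'fix hy' hy
    -- the witness: (K, w * y')
    refine ⟨⟨K, hKS⟩, w * y', fun k hk => hHfix k (hKH hk), ?_, ?_⟩
    · -- (GhatMul f f') K = K * {w * y'}
      ext z
      simp only [GhatMul, Set.mem_setOf_eq]
      constructor
      · rintro ⟨a, ha, b, hb, rfl⟩
        rw [hw] at ha
        obtain ⟨k, hk, rfl⟩ := mem_coset_iff.mp ha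
        have hconjeq : (⟨conjSub (k * w) K, hconj K hKS (k * w)⟩ :
            {H : Subgroup G // H ∈ S}) = Kw := Subtype.ext (conjSub_mul hk)
        rw [hconjeq, hy'] at hb
        obtain ⟨c, hc, rfl⟩ := mem_coset_iff.mp hb
        obtain ⟨u, hu, rfl⟩ := conjSub_mem_iff.mp hc
        refine mem_coset_iff.mpr ⟨k * u, K.mul_mem hk hu, by group⟩
      · intro hz
        obtain ⟨k, hk, rfl⟩ := mem_coset_iff.mp hz
        refine ⟨k * w, ?_, y', ?_, by group⟩
        · rw [hw]; exact mem_coset_iff.mpr ⟨k, hk, rfl⟩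
        · have hconjeq : (⟨conjSub (k * w) K, hconj K hKS (k * w)⟩ :
              {H : Subgroup G // H ∈ S}) = Kw := Subtype.ext (conjSub_mul hk)
          rw [hconjeq, hy']
          exact mem_coset_iff.mpr ⟨1, one_mem _, (one_mul y').symm⟩
    · -- m₂ = op (w * y') • m
      rw [MulOpposite.op_mul, mul_smul, hwm, hyy']
  · -- extends the G-action
    intro m g
    obtain ⟨H, hHS, hHfix⟩ := hM m
    exact ⟨⟨H, hHS⟩, g, hHfix, rfl, rfl⟩
end
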